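/- Let 0 < ε ≤ 1/2 and d ≥ 1. There exist two probability distributions D₁, D₂ on the d-dimensional torus T^d such that D̂₁(ℓ) = D̂₂(ℓ) for every ℓ ∈ Z^d with ‖ℓ‖_∞ ≤ √d/(2ε) − 1, yet the Wasserstein-1 distance (toroidal metric) between D₁ and D₂ is at least ε. -/

import Mathlib

open MeasureTheory Real ENNReal

noncomputable def dtor1 (a b : ℝ) : ℝ := min |a - b| (1 - |a - b|)

noncomputable def dtor {d : ℕ} (x y : Fin d → ℝ) : ℝ :=
  Real.sqrt (∑ i, (dtor1 (x i) (y i)) ^ 2)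

def torusSet (d : ℕ) : Set (Fin d → ℝ) := Set.univ.pi fun _ => Set.Ico (0:ℝ) 1

noncomputable def wassersteinTor {d : ℕ} (μ ν : Measure (Fin d → ℝ)) : ℝ :=
  sInf { c : ℝ | ∃ m : Measure ((Fin d → ℝ) × (Fin d → ℝ)),
    m.map Prod.fst = μ ∧ m.map Prod.snd = ν ∧ c = ∫ p, dtor p.1 p.2 ∂m }

/-- Fourier coefficient of a measure on the torus. -/
noncomputable def measureFourier {d : ℕ} (μ : Measure (Fin d → ℝ)) (ℓ : Fin d → ℤ) : ℂ :=
  ∫ x, Complex.exp (2 * Real.pi * Complex.I * ∑ i, (ℓ i : ℂ) * (x i : ℂ)) ∂μ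

/-! ### Auxiliary constructions and lemmas -/

/-- Uniform measure on the diagonal-shifted grid `{(k/N + t)_i}`. -/
noncomputable def unifGrid (d N : ℕ) (t : ℝ) : Measure (Fin d → ℝ) :=
  ((N : ℝ≥0∞) ^ d)⁻¹ • ∑ g : Fin d → Fin N, Measure.dirac (fun i => (g i : ℝ) / N + t)

lemma unifGrid_apply (d N : ℕ) (hN : 0 < N) (t : ℝ) {T : Set (Fin d → ℝ)}
    (hp : ∀ g : Fin d → Fin N, (fun i => (g i : ℝ) / N + t) ∈ T) :
    unifGrid d N t T = 1 := by
  rw [unifGrid, Measure.smul_apply, Measure.finset_sum_apply]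
  simp only [Measure.dirac_apply_of_mem (hp _)]
  rw [Finset.sum_const, Finset.card_univ]
  simp [Fintype.card_fun]
  exact ENNReal.inv_mul_cancel (by simp [hN.ne']) (ENNReal.pow_ne_top (ENNReal.natCast_ne_top N))

lemma unifGrid_prob (d N : ℕ) (hN : 0 < N) (t : ℝ) : IsProbabilityMeasure (unifGrid d N t) :=
  ⟨unifGrid_apply d N hN t (fun _ => trivial)⟩

lemma unifGrid_integral (d N : ℕ) (t : ℝ) (f : (Fin d → ℝ) → ℂ) :
    ∫ x, f x ∂(unifGrid d N t) =
      (((N : ℝ) ^ d)⁻¹ : ℝ) * ∑ g : Fin d → Fin N, f (fun i => (g i : ℝ) / N + t) := by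
  rw [unifGrid, integral_smul_measure, integral_finset_sum_measure]
  · simp [Complex.real_smul, ENNReal.toReal_inv, ENNReal.toReal_pow]
  · intro g _
    exact (integrable_const _).congr (MeasureTheory.ae_eq_dirac f).symm

lemma geom_exp_zero (N : ℕ) (hN : 0 < N) (m : ℤ) (hm : m ≠ 0) (hmN : |m| < N) :
    ∑ k : Fin N, Complex.exp (2 * Real.pi * Complex.I * m * ((k : ℝ) / N)) = 0 := by
  set z : ℂ := Complex.exp (2 * Real.pi * Complex.I * m / N) with hz
  have hzk : ∀ k : ℕ, Complex.exp (2 * Real.pi * Complex.I * m * ((k : ℝ) / N)) = z ^ k := by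
    intro k
    rw [hz, ← Complex.exp_nat_mul]
    congr 1
    push_cast
    ring
  have hzN : z ^ N = 1 := by
    rw [hz, ← Complex.exp_nat_mul]
    have hN0 : (N : ℂ) ≠ 0 := Nat.cast_ne_zero.mpr hN.ne'
    have : (N : ℂ) * (2 * Real.pi * Complex.I * m / N) = m * (2 * Real.pi * Complex.I) := by
      field_simp
    rw [this, Complex.exp_int_mul_two_pi_mul_I]
  have hz1 : z ≠ 1 := by
    rw [hz, Ne, Complex.exp_eq_one_iff]
    rintro ⟨n, hn⟩
    have hN0 : (N : ℂ) ≠ 0 := Nat.cast_ne_zero.mpr hN.ne'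
    have hpi : (2 * (Real.pi : ℂ) * Complex.I) ≠ 0 := by
      simp [Real.pi_ne_zero, Complex.I_ne_zero]
    have hmn : (m : ℂ) = n * N := by
      field_simp at hn
      have h2 : (m : ℂ) * (2 * (Real.pi:ℂ) * Complex.I) = ((n:ℂ) * N) * (2 * (Real.pi:ℂ) * Complex.I) := by
        linear_combination (2 * (Real.pi:ℂ) * Complex.I) * hn
      exact mul_right_cancel₀ hpi h2
    have hm' : m = n * N := by exact_mod_cast hmn
    rcases eq_or_ne n 0 with rfl | hn0
    · simp at hm'; omega
    · have h1 : (1:ℤ) ≤ |n| := Int.one_le_abs hn0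
      have : (N:ℤ) ≤ |m| := by
        calc (N:ℤ) = 1 * N := (one_mul _).symm
        _ ≤ |n| * N := by
          apply mul_le_mul_of_nonneg_right h1 (by positivity)
        _ = |m| := by rw [hm', abs_mul]; simp
      omega
  calc ∑ k : Fin N, Complex.exp (2 * Real.pi * Complex.I * m * ((k : ℝ) / N))
      = ∑ k : Fin N, z ^ (k : ℕ) := by
        exact Finset.sum_congr rfl fun k _ => hzk k
    _ = ∑ k ∈ Finset.range N, z ^ k := Fin.sum_univ_eq_sum_range (fun k => z ^ k) N
    _ = (z ^ N - 1) / (z - 1) := geom_sum_eq hz1 N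
    _ = 0 := by rw [hzN]; simp

lemma grid_fourier_zero (d N : ℕ) (hN : 0 < N) (t : ℝ) (ℓ : Fin d → ℤ)
    (hℓ : ∀ i, |ℓ i| < N) (i₀ : Fin d) (hi₀ : ℓ i₀ ≠ 0) :
    ∑ g : Fin d → Fin N, Complex.exp (2 * Real.pi * Complex.I *
      ∑ i, (ℓ i : ℂ) * ((((g i : ℝ) / N + t : ℝ)) : ℂ)) = 0 := by
  have hterm : ∀ g : Fin d → Fin N,
      Complex.exp (2 * Real.pi * Complex.I * ∑ i, (ℓ i : ℂ) * ((((g i : ℝ) / N + t : ℝ)) : ℂ))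
      = ∏ i, Complex.exp (2 * Real.pi * Complex.I * (ℓ i : ℂ) * (((g i : ℝ) / N + t : ℝ) : ℂ)) := by
    intro g
    rw [← Complex.exp_sum, Finset.mul_sum]
    congr 1
    exact Finset.sum_congr rfl fun i _ => by ring
  simp only [hterm]
  have := (Finset.prod_univ_sum (fun _ : Fin d => (Finset.univ : Finset (Fin N)))
    (fun i k => Complex.exp (2 * Real.pi * Complex.I * (ℓ i : ℂ) * (((k : ℝ) / N + t : ℝ) : ℂ)))).symm
  rw [Fintype.piFinset_univ] at this
  rw [this]
  apply Finset.prod_eq_zero (Finset.mem_univ i₀)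
  have hsplit : ∀ k : Fin N,
      Complex.exp (2 * Real.pi * Complex.I * (ℓ i₀ : ℂ) * (((k : ℝ) / N + t : ℝ) : ℂ))
      = Complex.exp (2 * Real.pi * Complex.I * (ℓ i₀ : ℂ) * (t : ℂ)) *
        Complex.exp (2 * Real.pi * Complex.I * (ℓ i₀ : ℂ) * ((k : ℝ) / N)) := by
    intro k
    rw [← Complex.exp_add]
    congr 1
    push_cast
    ring
  simp only [hsplit, ← Finset.mul_sum]
  have h0 : ∑ k : Fin N, Complex.exp (2 * Real.pi * Complex.I * (ℓ i₀ : ℂ) * ((k : ℝ) / N)) = 0 := by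
    have := geom_exp_zero N hN (ℓ i₀) hi₀ (hℓ i₀)
    convert this using 2 with k
  rw [h0, mul_zero]

lemma dtor1_bounds (N : ℕ) (hN : 0 < N) (a b : Fin N) :
    1/(2*(N:ℝ)) ≤ dtor1 ((a:ℝ)/N + 0) ((b:ℝ)/N + 1/(2*N)) ∧
      dtor1 ((a:ℝ)/N + 0) ((b:ℝ)/N + 1/(2*N)) ≤ 1 := by
  have hN0 : (0:ℝ) < N := Nat.cast_pos.mpr hN
  have ha := a.isLt
  have hb := b.isLt
  have hu : ((a:ℝ)/N + 0) - ((b:ℝ)/N + 1/(2*N)) = ((2*((a:ℤ)-(b:ℤ))-1 : ℤ) : ℝ)/(2*N) := by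
    push_cast
    field_simp
    ring
  have hz1 : (1:ℤ) ≤ |2*((a:ℤ)-(b:ℤ))-1| := Int.one_le_abs (by omega)
  have hz2 : |2*((a:ℤ)-(b:ℤ))-1| ≤ 2*(N:ℤ) - 1 := abs_le.mpr ⟨by omega, by omega⟩
  have h1 : (1:ℝ) ≤ |((2*((a:ℤ)-(b:ℤ))-1 : ℤ) : ℝ)| := by
    rw [← Int.cast_abs]; exact_mod_cast hz1
  have h2 : |((2*((a:ℤ)-(b:ℤ))-1 : ℤ) : ℝ)| ≤ 2*(N:ℝ) - 1 := by
    rw [← Int.cast_abs]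
    calc ((|2*((a:ℤ)-(b:ℤ))-1| : ℤ) : ℝ) ≤ ((2*(N:ℤ) - 1 : ℤ) : ℝ) := by exact_mod_cast hz2
    _ = 2*N - 1 := by push_cast; ring
  have habs : |((a:ℝ)/N + 0) - ((b:ℝ)/N + 1/(2*N))| = |((2*((a:ℤ)-(b:ℤ))-1 : ℤ) : ℝ)|/(2*N) := by
    rw [hu, abs_div]
    congr 1
    rw [abs_of_pos (by positivity)]
  constructor
  · rw [dtor1, le_min_iff, habs]
    refine ⟨div_le_div_of_nonneg_right h1 (by positivity), ?_⟩
    rw [le_sub_iff_add_le, ← add_div, div_le_one (by positivity)]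
    linarith
  · rw [dtor1]
    refine (min_le_left _ _).trans ?_
    rw [habs, div_le_one (by positivity)]
    linarith

lemma dtor_bounds (d N : ℕ) (hN : 0 < N) (g h : Fin d → Fin N) :
    Real.sqrt d / (2*(N:ℝ)) ≤ dtor (fun i => (g i : ℝ)/N + 0) (fun i => (h i : ℝ)/N + 1/(2*N)) ∧
      dtor (fun i => (g i : ℝ)/N + 0) (fun i => (h i : ℝ)/N + 1/(2*N)) ≤ Real.sqrt d := by
  have hN0 : (0:ℝ) < N := Nat.cast_pos.mpr hN
  have key : ∀ i, (1/(2*(N:ℝ)))^2 ≤ (dtor1 ((g i : ℝ)/N + 0) ((h i : ℝ)/N + 1/(2*N)))^2 ∧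
      (dtor1 ((g i : ℝ)/N + 0) ((h i : ℝ)/N + 1/(2*N)))^2 ≤ 1 := by
    intro i
    obtain ⟨h1, h2⟩ := dtor1_bounds N hN (g i) (h i)
    constructor
    · exact pow_le_pow_left₀ (by positivity) h1 2
    · calc (dtor1 ((g i : ℝ)/N + 0) ((h i : ℝ)/N + 1/(2*N)))^2 ≤ 1^2 :=
        pow_le_pow_left₀ (le_trans (by positivity) h1) h2 2
      _ = 1 := one_pow 2
  constructor
  · rw [dtor]
    have hsum : (d:ℝ) * (1/(2*(N:ℝ)))^2 ≤ ∑ i, (dtor1 ((g i : ℝ)/N + 0) ((h i : ℝ)/N + 1/(2*N)))^2 := by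
      calc (d:ℝ) * (1/(2*(N:ℝ)))^2 = ∑ _i : Fin d, (1/(2*(N:ℝ)))^2 := by
            rw [Finset.sum_const, Finset.card_univ, Fintype.card_fin]; ring
      _ ≤ _ := Finset.sum_le_sum fun i _ => (key i).1
    calc Real.sqrt d / (2*(N:ℝ)) = Real.sqrt ((d:ℝ) * (1/(2*(N:ℝ)))^2) := by
          rw [Real.sqrt_mul (Nat.cast_nonneg d), Real.sqrt_sq (by positivity)]
          ring
    _ ≤ _ := Real.sqrt_le_sqrt hsum
  · rw [dtor]
    have hsum : ∑ i, (dtor1 ((g i : ℝ)/N + 0) ((h i : ℝ)/N + 1/(2*N)))^2 ≤ (d:ℝ) := by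
      calc _ ≤ ∑ _i : Fin d, (1:ℝ) := Finset.sum_le_sum fun i _ => (key i).2
      _ = d := by simp
    exact Real.sqrt_le_sqrt hsum

lemma measureFourier_one {d : ℕ} (μ : Measure (Fin d → ℝ)) [IsProbabilityMeasure μ]
    (ℓ : Fin d → ℤ) (hc : ∀ i, ℓ i = 0) : measureFourier μ ℓ = 1 := by
  simp [measureFourier, hc]

lemma dtor_continuous (d : ℕ) : Continuous fun p : (Fin d → ℝ) × (Fin d → ℝ) => dtor p.1 p.2 := by
  unfold dtor dtor1
  fun_prop

theorem wasserstein_lower_bound_exact_coeffs (d : ℕ) (hd : 1 ≤ d) (ε : ℝ)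
    (hε0 : 0 < ε) (hε : ε ≤ 1 / 2) :
    ∃ D₁ D₂ : Measure (Fin d → ℝ), IsProbabilityMeasure D₁ ∧ IsProbabilityMeasure D₂ ∧
      D₁ (torusSet d) = 1 ∧ D₂ (torusSet d) = 1 ∧
      (∀ ℓ : Fin d → ℤ, (∀ i, (|ℓ i| : ℝ) ≤ Real.sqrt d / (2 * ε) - 1) →
        measureFourier D₁ ℓ = measureFourier D₂ ℓ) ∧
      ε ≤ wassersteinTor D₁ D₂ := by
  classical
  have hd1 : (1:ℝ) ≤ Real.sqrt d := by
    rw [show (1:ℝ) = Real.sqrt 1 from (Real.sqrt_one).symm]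
    exact Real.sqrt_le_sqrt (by exact_mod_cast hd)
  have hx : (1:ℝ) ≤ Real.sqrt d / (2 * ε) := by
    rw [one_le_div (by positivity)]
    linarith
  set N : ℕ := ⌊Real.sqrt d / (2 * ε)⌋₊ with hNdef
  have hN1 : 1 ≤ N := Nat.le_floor (by exact_mod_cast hx)
  have hN : 0 < N := hN1
  have hN0 : (0:ℝ) < N := Nat.cast_pos.mpr hN
  have hNle : (N:ℝ) ≤ Real.sqrt d / (2 * ε) := Nat.floor_le (by positivity)
  have hεN : ε ≤ Real.sqrt d / (2 * N) := by
    rw [le_div_iff₀ (by positivity)]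
    have : (N:ℝ) * (2 * ε) ≤ Real.sqrt d := by
      rw [← le_div_iff₀ (by positivity)]
      exact hNle
    linarith
  refine ⟨unifGrid d N 0, unifGrid d N (1/(2*(N:ℝ))), unifGrid_prob d N hN 0,
    unifGrid_prob d N hN _, ?_, ?_, ?_, ?_⟩
  · -- D₁ torusSet = 1
    apply unifGrid_apply d N hN 0
    intro g
    rw [torusSet, Set.mem_univ_pi]
    intro i
    have := (g i).isLt
    constructor
    · positivity
    · rw [add_zero, div_lt_one hN0]
      exact_mod_cast this
  · -- D₂ torusSet = 1
    apply unifGrid_apply d N hN _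
    intro g
    rw [torusSet, Set.mem_univ_pi]
    intro i
    have hlt := (g i).isLt
    have hle : ((g i : ℕ) : ℝ) ≤ (N:ℝ) - 1 := by
      have : (g i : ℕ) + 1 ≤ N := hlt
      have := (Nat.cast_le (α := ℝ)).mpr this
      push_cast at this
      linarith
    constructor
    · positivity
    · have : (g i : ℝ)/N + 1/(2*N) = ((g i : ℝ) + 1/2)/N := by ring
      rw [this, div_lt_one hN0]
      linarith
  · -- Fourier coefficients agree
    intro ℓ hℓ
    by_cases hc : ∀ i, ℓ i = 0
    · haveI := unifGrid_prob d N hN 0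
      haveI := unifGrid_prob d N hN (1/(2*(N:ℝ)))
      rw [measureFourier_one _ ℓ hc, measureFourier_one _ ℓ hc]
    · push_neg at hc
      obtain ⟨i₀, hi₀⟩ := hc
      have hℓN : ∀ i, |ℓ i| < (N:ℤ) := by
        intro i
        have h1 : (|ℓ i| : ℝ) + 1 ≤ Real.sqrt d / (2 * ε) := by linarith [hℓ i]
        have h2 : ((|ℓ i|.toNat + 1 : ℕ) : ℝ) ≤ Real.sqrt d / (2 * ε) := by
          have hcast : ((|ℓ i|.toNat : ℕ) : ℝ) = |((ℓ i : ℤ) : ℝ)| := by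
            rw [show ((|ℓ i|.toNat : ℕ) : ℝ) = (((|ℓ i|.toNat : ℕ) : ℤ) : ℝ) by push_cast; ring,
              Int.toNat_of_nonneg (abs_nonneg _), Int.cast_abs]
          push_cast
          rw [hcast]
          push_cast at h1
          exact h1
        have h3 : |ℓ i|.toNat + 1 ≤ N := Nat.le_floor h2
        omega
      rw [measureFourier, measureFourier, unifGrid_integral, unifGrid_integral,
        grid_fourier_zero d N hN 0 ℓ hℓN i₀ hi₀, grid_fourier_zero d N hN _ ℓ hℓN i₀ hi₀]
  · -- Wasserstein lower bound
    set D₁ := unifGrid d N 0 with hD₁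
    set D₂ := unifGrid d N (1/(2*(N:ℝ))) with hD₂
    haveI : IsProbabilityMeasure D₁ := unifGrid_prob d N hN 0
    haveI : IsProbabilityMeasure D₂ := unifGrid_prob d N hN _
    rw [wassersteinTor]
    apply le_csInf
    · refine ⟨∫ p, dtor p.1 p.2 ∂(D₁.prod D₂), D₁.prod D₂, ?_, ?_, rfl⟩
      · rw [Measure.map_fst_prod, measure_univ, one_smul]
      · rw [Measure.map_snd_prod, measure_univ, one_smul]
    · rintro c ⟨m, hm1, hm2, rfl⟩
      have hm_univ : m Set.univ = 1 := by
        have := congrArg (fun μ : Measure (Fin d → ℝ) => μ Set.univ) hm1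
        simp only [Measure.map_apply measurable_fst MeasurableSet.univ, Set.preimage_univ] at this
        rw [this]
        exact measure_univ
      haveI hm_prob : IsProbabilityMeasure m := ⟨hm_univ⟩
      set S₁ : Set (Fin d → ℝ) := Set.range (fun g : Fin d → Fin N => fun i => (g i : ℝ)/N + 0)
        with hS₁def
      set S₂ : Set (Fin d → ℝ) :=
        Set.range (fun g : Fin d → Fin N => fun i => (g i : ℝ)/N + 1/(2*(N:ℝ))) with hS₂def
      have hS₁m : MeasurableSet S₁ := (Set.finite_range _).measurableSet
      have hS₂m : MeasurableSet S₂ := (Set.finite_range _).measurableSet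
      have hmS₁ : m (Prod.fst ⁻¹' S₁) = 1 := by
        rw [← Measure.map_apply measurable_fst hS₁m, hm1]
        exact unifGrid_apply d N hN 0 (fun g => Set.mem_range_self g)
      have hmS₂ : m (Prod.snd ⁻¹' S₂) = 1 := by
        rw [← Measure.map_apply measurable_snd hS₂m, hm2]
        exact unifGrid_apply d N hN _ (fun g => Set.mem_range_self g)
      set A : Set ((Fin d → ℝ) × (Fin d → ℝ)) := (Prod.fst ⁻¹' S₁) ∩ (Prod.snd ⁻¹' S₂) with hAdef
      have hAm : MeasurableSet A := (hS₁m.preimage measurable_fst).inter (hS₂m.preimage measurable_snd)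
      have hAc : m Aᶜ = 0 := by
        rw [hAdef, Set.compl_inter]
        apply measure_union_null
        · rw [measure_compl (hS₁m.preimage measurable_fst) (measure_ne_top m _), hm_univ, hmS₁]
          simp
        · rw [measure_compl (hS₂m.preimage measurable_snd) (measure_ne_top m _), hm_univ, hmS₂]
          simp
      have hA_mem : ∀ᵐ p ∂m, p ∈ A := by
        rw [ae_iff]
        exact hAc
      have hA_bound : ∀ p ∈ A, ε ≤ dtor p.1 p.2 ∧ dtor p.1 p.2 ≤ Real.sqrt d := by
        rintro ⟨p₁, p₂⟩ ⟨hp₁, hp₂⟩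
        obtain ⟨g, rfl⟩ := hp₁
        obtain ⟨h, rfl⟩ := hp₂
        obtain ⟨hlo, hhi⟩ := dtor_bounds d N hN g h
        exact ⟨hεN.trans hlo, hhi⟩
      set f : ((Fin d → ℝ) × (Fin d → ℝ)) → ℝ :=
        fun p => if p ∈ A then dtor p.1 p.2 else ε with hfdef
      have hf_ae : (fun p : ((Fin d → ℝ) × (Fin d → ℝ)) => dtor p.1 p.2) =ᵐ[m] f := by
        filter_upwards [hA_mem] with p hp
        simp [hfdef, hp]
      have hf_meas : Measurable f := by
        apply Measurable.ite hAm
        · exact (dtor_continuous d).measurable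
        · exact measurable_const
      have hf_bound : ∀ p, |f p| ≤ Real.sqrt d := by
        intro p
        rw [hfdef]
        by_cases hp : p ∈ A
        · simp only [hp, if_true]
          obtain ⟨h1, h2⟩ := hA_bound p hp
          rw [abs_of_nonneg (le_trans hε0.le h1)]
          exact h2
        · simp only [hp, if_false]
          rw [abs_of_pos hε0]
          linarith
      have hf_int : Integrable f m :=
        Integrable.mono' (integrable_const (Real.sqrt d)) hf_meas.aestronglyMeasurable
          (Filter.Eventually.of_forall hf_bound)
      have hf_lb : ∀ p, ε ≤ f p := by
        intro p
        rw [hfdef]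
        by_cases hp : p ∈ A
        · simp only [hp, if_true]
          exact (hA_bound p hp).1
        · simp [hp]
      calc ε = ∫ _p, ε ∂m := by
            rw [integral_const]
            simp
      _ ≤ ∫ p, f p ∂m := integral_mono (integrable_const ε) hf_int hf_lb
      _ = ∫ p, dtor p.1 p.2 ∂m := (integral_congr_ae hf_ae).symm
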